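/- Let A ∈ ℂ^{m×m}, B ∈ ℂ^{n×n} be complex matrices viewed as quaternion matrices, and C = C₁ + C₂·j with C₁, C₂ complex. A quaternion matrix X = X₁ + X₂·j satisfies X - A X^i B = C (where X^i = X₁ - X₂j) if and only if X₁ - AX₁B = C₁ and X₂ + A X₂ conj(B) = C₂. -/

import Mathlib

open Quaternion

noncomputable def qi : ℍ[ℝ] := ⟨0, 1, 0, 0⟩
noncomputable def qj : ℍ[ℝ] := ⟨0, 0, 1, 0⟩

/-- The embedding of `ℂ` into `ℍ[ℝ]` as the span of `1` and `i`. -/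
noncomputable def cq (z : ℂ) : ℍ[ℝ] := ⟨z.re, z.im, 0, 0⟩

/-- A complex matrix viewed as a quaternion matrix. -/
noncomputable def cmap {m n : ℕ} (M : Matrix (Fin m) (Fin n) ℂ) :
    Matrix (Fin m) (Fin n) ℍ[ℝ] := M.map cq

/-- Entrywise application of the involutive automorphism `h ↦ -ihi`. -/
noncomputable def phiM {m n : ℕ} (M : Matrix (Fin m) (Fin n) ℍ[ℝ]) :
    Matrix (Fin m) (Fin n) ℍ[ℝ] := M.map fun h => -(qi * h * qi)

/-- Entrywise right multiplication by `j`. -/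
noncomputable def jmul {m n : ℕ} (M : Matrix (Fin m) (Fin n) ℍ[ℝ]) :
    Matrix (Fin m) (Fin n) ℍ[ℝ] := M.map fun h => h * qj

/-!
Write `X = X₁ + X₂ j` with complex `X₁, X₂`. The automorphism `h ↦ -ihi` fixes `ℂ` and negates
`j`, so `X^i = X₁ - X₂ j`; pushing `j` past the complex matrix `B` conjugates it. Hence
`X - A X^i B = (X₁ - A X₁ B) + (X₂ + A X₂ conj(B)) j`, and the claim follows because the complex
and `j`-parts of a quaternion matrix are uniquely determined.
-/

lemma cq_eq_ofComplex : cq = ⇑Quaternion.ofComplex := rfl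

lemma qj_mul_cq (z : ℂ) : qj * cq z = cq (starRingEnd ℂ z) * qj := by
  ext <;> simp only [re_mul, imI_mul, imJ_mul, imK_mul] <;> simp [cq, qj]

lemma neg_qi_mul_cq_mul_qi (z : ℂ) : -(qi * cq z * qi) = cq z := by
  ext <;> simp only [re_neg, imI_neg, imJ_neg, imK_neg, re_mul, imI_mul, imJ_mul, imK_mul] <;>
    simp [cq, qi]

lemma neg_qi_mul_cq_mul_qj_mul_qi (z : ℂ) : -(qi * (cq z * qj) * qi) = -(cq z * qj) := by
  ext <;> simp only [re_neg, imI_neg, imJ_neg, imK_neg, re_mul, imI_mul, imJ_mul, imK_mul] <;>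
    simp [cq, qi, qj]

lemma cq_add_cq_mul_qj_inj {z w z' w' : ℂ} :
    cq z + cq w * qj = cq z' + cq w' * qj ↔ z = z' ∧ w = w' := by
  refine ⟨fun h => ?_, by rintro ⟨rfl, rfl⟩; rfl⟩
  have hre := congrArg QuaternionAlgebra.re h
  have hI := congrArg QuaternionAlgebra.imI h
  have hJ := congrArg QuaternionAlgebra.imJ h
  have hK := congrArg QuaternionAlgebra.imK h
  simp only [re_add, imI_add, imJ_add, imK_add, re_mul, imI_mul, imJ_mul, imK_mul] at hre hI hJ hK
  simp [cq, qj] at hre hI hJ hK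
  exact ⟨Complex.ext hre hI, Complex.ext hJ hK⟩

section Matrices

variable {m n p : ℕ}

lemma cmap_add (M N : Matrix (Fin m) (Fin n) ℂ) : cmap (M + N) = cmap M + cmap N :=
  Matrix.map_add _ (map_add Quaternion.ofComplex) M N

lemma cmap_sub (M N : Matrix (Fin m) (Fin n) ℂ) : cmap (M - N) = cmap M - cmap N :=
  Matrix.map_sub _ (map_sub Quaternion.ofComplex) M N

lemma cmap_mul (M : Matrix (Fin m) (Fin n) ℂ) (N : Matrix (Fin n) (Fin p) ℂ) :
    cmap (M * N) = cmap M * cmap N :=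
  Matrix.map_mul (f := Quaternion.ofComplex)

lemma jmul_add (M N : Matrix (Fin m) (Fin n) ℍ[ℝ]) : jmul (M + N) = jmul M + jmul N :=
  Matrix.map_add _ (fun _ _ => add_mul _ _ _) M N

lemma mul_jmul (M : Matrix (Fin m) (Fin n) ℍ[ℝ]) (N : Matrix (Fin n) (Fin p) ℍ[ℝ]) :
    M * jmul N = jmul (M * N) := by
  refine Matrix.ext fun i k => ?_
  simp only [jmul, Matrix.map_apply, Matrix.mul_apply, Finset.sum_mul, mul_assoc]

lemma jmul_cmap_mul_cmap (M : Matrix (Fin m) (Fin n) ℂ) (N : Matrix (Fin n) (Fin p) ℂ) :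
    jmul (cmap M) * cmap N = jmul (cmap (M * N.map (starRingEnd ℂ))) := by
  refine Matrix.ext fun i k => ?_
  simp only [jmul, cmap, Matrix.map_apply, Matrix.mul_apply, cq_eq_ofComplex, map_sum, map_mul,
    Finset.sum_mul, mul_assoc]
  simp only [← cq_eq_ofComplex, qj_mul_cq]

lemma phiM_cmap_add_jmul_cmap (P Q : Matrix (Fin m) (Fin n) ℂ) :
    phiM (cmap P + jmul (cmap Q)) = cmap P - jmul (cmap Q) := by
  refine Matrix.ext fun i k => ?_
  simp only [phiM, cmap, jmul, Matrix.map_apply, Matrix.add_apply, Matrix.sub_apply, mul_add,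
    add_mul, neg_add, neg_qi_mul_cq_mul_qi, neg_qi_mul_cq_mul_qj_mul_qi, sub_eq_add_neg]

lemma cmap_add_jmul_cmap_inj {P Q P' Q' : Matrix (Fin m) (Fin n) ℂ} :
    cmap P + jmul (cmap Q) = cmap P' + jmul (cmap Q') ↔ P = P' ∧ Q = Q' := by
  simp only [← Matrix.ext_iff, cmap, jmul, Matrix.add_apply, Matrix.map_apply,
    cq_add_cq_mul_qj_inj]
  exact ⟨fun h => ⟨fun i k => (h i k).1, fun i k => (h i k).2⟩,
    fun h i k => ⟨h.1 i k, h.2 i k⟩⟩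

lemma cmap_add_jmul_cmap_sub_mul_phiM_mul (A : Matrix (Fin m) (Fin m) ℂ)
    (B : Matrix (Fin n) (Fin n) ℂ) (X₁ X₂ : Matrix (Fin m) (Fin n) ℂ) :
    (cmap X₁ + jmul (cmap X₂)) - cmap A * phiM (cmap X₁ + jmul (cmap X₂)) * cmap B =
      cmap (X₁ - A * X₁ * B) + jmul (cmap (X₂ + A * X₂ * B.map (starRingEnd ℂ))) := by
  rw [phiM_cmap_add_jmul_cmap, Matrix.mul_sub, Matrix.sub_mul, mul_jmul, cmap_sub, cmap_add,
    jmul_add, ← jmul_cmap_mul_cmap]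
  simp only [cmap_mul]
  abel

end Matrices

theorem stein_type_split {m n : ℕ}
    (A : Matrix (Fin m) (Fin m) ℂ) (B : Matrix (Fin n) (Fin n) ℂ)
    (C₁ C₂ X₁ X₂ : Matrix (Fin m) (Fin n) ℂ) :
    ((cmap X₁ + jmul (cmap X₂)) -
        cmap A * phiM (cmap X₁ + jmul (cmap X₂)) * cmap B =
      cmap C₁ + jmul (cmap C₂)) ↔
    (X₁ - A * X₁ * B = C₁ ∧ X₂ + A * X₂ * B.map (starRingEnd ℂ) = C₂) := by
  rw [cmap_add_jmul_cmap_sub_mul_phiM_mul, cmap_add_jmul_cmap_inj]
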